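/- arXiv:2211.17005 — 3 statements merged into one kernel-verified Lean document; each statement's English description precedes it below -/
import Mathlib

section
/- Let φ(X,Y) be integrable and non-degenerate, with M(z,y) = E[exp(zφ(X,Y))|Y=y] well defined for all z, y. Define Λ(t) = log E[M(t/N, Y)^N]. Then Λ is strictly convex, Λ'(0) = E[φ(X,Y)], and Λ''(0) = (1/N)E[Var(φ(X,Y)|Y)] + Var(E[φ(X,Y)|Y]). -/
/-!
Write `K_y` for the cumulant generating function of `φ y` under `κ y`, so that
`M(z, y) ^ N = exp (N K_y z)` and `Λ t = log G (t / N)` with `G z = ∫ exp (N K_y z) dν`.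
Near `z₀` all `z`-derivatives of the integrand are dominated by a multiple of
`(M(z₀ - 2, y) + M(z₀ + 2, y)) ^ N`, so one may differentiate under the integral sign:
`G' = N ∫ K_y' e^{N K_y}` and `(∫ K_y' e^{N K_y})' = ∫ (K_y'' + N K_y' ^ 2) e^{N K_y}`.
If `c` is the `e^{N K_y} dν`-average of `K_y'`, the numerator of `Λ''` is
`G · ∫ (K_y'' + N (K_y' - c) ^ 2) e^{N K_y} dν`. Since `K_y''` is the variance of `φ y` under the
exponentially tilted law, the integrand vanishes a.e. only if `φ = c` a.e., which
non-degeneracy excludes. At `t = 0`, `K_y'` and `K_y''` are the conditional mean and variance.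
-/

open MeasureTheory ProbabilityTheory

open Real Set Filter Metric

lemma exp_mul_le_exp_mul_add_exp_mul {a b z : ℝ} (u : ℝ) (ha : a ≤ z) (hb : z ≤ b) :
    exp (z * u) ≤ exp (a * u) + exp (b * u) := by
  rcases le_total u 0 with hu | hu
  · exact le_add_of_le_of_nonneg (exp_le_exp.2 (mul_le_mul_of_nonpos_right ha hu)) (exp_pos _).le
  · exact le_add_of_nonneg_of_le (exp_pos _).le (exp_le_exp.2 (mul_le_mul_of_nonneg_right hb hu))

lemma sq_mul_exp_le (u z : ℝ) :
    u ^ 2 * exp (z * u) ≤ 2 * (exp ((z - 1) * u) + exp ((z + 1) * u)) := by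
  have h_sq : u ^ 2 ≤ 2 * exp |u| := by
    have := Real.pow_div_factorial_le_exp _ (abs_nonneg u) 2
    rw [sq_abs] at this
    norm_num at this
    linarith
  have h_abs : exp |u| ≤ exp (-u) + exp u := by
    rcases abs_cases u with ⟨h, -⟩ | ⟨h, -⟩ <;> rw [h] <;> linarith [exp_pos u, exp_pos (-u)]
  calc u ^ 2 * exp (z * u) ≤ 2 * (exp (-u) + exp u) * exp (z * u) := by gcongr; linarith
    _ = 2 * (exp (-u + z * u) + exp (u + z * u)) := by rw [exp_add, exp_add]; ring
    _ = _ := by ring_nf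

section WeightedDispersion

variable {α : Type*} [MeasurableSpace α] {μ : Measure α} {f w : α → ℝ}

lemma integrable_sub_sq_mul (hw : Integrable w μ) (hfw : Integrable (fun y => f y * w y) μ)
    (hf2w : Integrable (fun y => f y ^ 2 * w y) μ) (c : ℝ) :
    Integrable (fun y => (f y - c) ^ 2 * w y) μ :=
  ((hf2w.sub (hfw.const_mul (2 * c))).add (hw.const_mul (c ^ 2))).congr
    (ae_of_all _ fun y => by simp only [Pi.add_apply, Pi.sub_apply]; ring)

lemma integral_sub_sq_mul (hw : Integrable w μ) (hfw : Integrable (fun y => f y * w y) μ)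
    (hf2w : Integrable (fun y => f y ^ 2 * w y) μ) (c : ℝ) :
    ∫ y, (f y - c) ^ 2 * w y ∂μ
      = ∫ y, f y ^ 2 * w y ∂μ - 2 * c * ∫ y, f y * w y ∂μ + c ^ 2 * ∫ y, w y ∂μ := by
  calc ∫ y, (f y - c) ^ 2 * w y ∂μ
      = ∫ y, (f y ^ 2 * w y - 2 * c * (f y * w y)) + c ^ 2 * w y ∂μ :=
        integral_congr_ae (ae_of_all _ fun y => by ring)
    _ = _ := by
        have h_diff : Integrable (fun y => f y ^ 2 * w y - 2 * c * (f y * w y)) μ :=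
          hf2w.sub (hfw.const_mul _)
        rw [integral_add h_diff (hw.const_mul _),
          integral_sub hf2w (hfw.const_mul _), integral_const_mul, integral_const_mul]

end WeightedDispersion

section CGF

variable {Ω : Type*} {mΩ : MeasurableSpace Ω} {μ : Measure Ω} {X : Ω → ℝ} {z : ℝ}

lemma mem_interior_integrableExpSet_of_forall
    (hX : ∀ z, Integrable (fun ω => exp (z * X ω)) μ) (z : ℝ) :
    z ∈ interior (integrableExpSet X μ) := by
  simp [eq_univ_of_forall (s := integrableExpSet X μ) hX]

lemma hasDerivAt_cgf_of_forall (hX : ∀ z, Integrable (fun ω => exp (z * X ω)) μ) (z : ℝ) :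
    HasDerivAt (cgf X μ) (deriv (cgf X μ) z) z :=
  (analyticAt_cgf (mem_interior_integrableExpSet_of_forall hX z)).differentiableAt.hasDerivAt

lemma hasDerivAt_deriv_cgf_of_forall (hX : ∀ z, Integrable (fun ω => exp (z * X ω)) μ)
    (z : ℝ) : HasDerivAt (deriv (cgf X μ)) (iteratedDeriv 2 (cgf X μ) z) z := by
  rw [iteratedDeriv_succ, iteratedDeriv_one]
  exact (analyticAt_cgf (mem_interior_integrableExpSet_of_forall hX z)).deriv.differentiableAt
    |>.hasDerivAt

lemma iteratedDeriv_two_cgf_nonneg (hz : z ∈ interior (integrableExpSet X μ)) :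
    0 ≤ iteratedDeriv 2 (cgf X μ) z := by
  rw [iteratedDeriv_two_cgf_eq_integral hz]
  exact div_nonneg (integral_nonneg fun ω => by positivity) mgf_nonneg

lemma mgf_le_mgf_add_mgf (hX : ∀ z, Integrable (fun ω => exp (z * X ω)) μ) {a b : ℝ}
    (ha : a ≤ z) (hb : z ≤ b) : mgf X μ z ≤ mgf X μ a + mgf X μ b := by
  rw [mgf, mgf, mgf, ← integral_add (hX a) (hX b)]
  exact integral_mono (hX z) ((hX a).add (hX b))
    fun ω => exp_mul_le_exp_mul_add_exp_mul (X ω) ha hb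

lemma integral_sq_mul_exp_le (hX : ∀ z, Integrable (fun ω => exp (z * X ω)) μ) (z : ℝ) :
    ∫ ω, X ω ^ 2 * exp (z * X ω) ∂μ ≤ 2 * (mgf X μ (z - 1) + mgf X μ (z + 1)) := by
  rw [mgf, mgf, ← integral_add (hX _) (hX _), ← integral_const_mul]
  exact integral_mono
    (integrable_pow_mul_exp_of_mem_interior_integrableExpSet
      (mem_interior_integrableExpSet_of_forall hX z) 2)
    (((hX _).add (hX _)).const_mul 2) fun ω => sq_mul_exp_le (X ω) z

lemma hasDerivAt_exp_nat_mul_cgf (hX : ∀ z, Integrable (fun ω => exp (z * X ω)) μ) (N : ℕ)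
    (z : ℝ) : HasDerivAt (fun z => exp (N * cgf X μ z))
      (N * (deriv (cgf X μ) z * exp (N * cgf X μ z))) z :=
  ((hasDerivAt_cgf_of_forall hX z).const_mul (N : ℝ)).exp.congr_deriv (by ring)

lemma hasDerivAt_deriv_cgf_mul_exp_nat_mul_cgf
    (hX : ∀ z, Integrable (fun ω => exp (z * X ω)) μ) (N : ℕ) (z : ℝ) :
    HasDerivAt (fun z => deriv (cgf X μ) z * exp (N * cgf X μ z))
      ((iteratedDeriv 2 (cgf X μ) z + N * deriv (cgf X μ) z ^ 2) * exp (N * cgf X μ z)) z :=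
  ((hasDerivAt_deriv_cgf_of_forall hX z).fun_mul
    (hasDerivAt_exp_nat_mul_cgf hX N z)).congr_deriv (by ring)

variable [IsProbabilityMeasure μ]

lemma integral_sq_mul_exp_eq (hz : z ∈ interior (integrableExpSet X μ)) :
    ∫ ω, X ω ^ 2 * exp (z * X ω) ∂μ
      = (iteratedDeriv 2 (cgf X μ) z + deriv (cgf X μ) z ^ 2) * mgf X μ z := by
  rw [iteratedDeriv_two_cgf hz, sub_add_cancel, div_mul_cancel₀]
  exact (mgf_pos (interior_subset (s := integrableExpSet X μ) hz)).ne'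

lemma ae_eq_deriv_cgf_of_iteratedDeriv_two_cgf_eq_zero (hz : z ∈ interior (integrableExpSet X μ))
    (h : iteratedDeriv 2 (cgf X μ) z = 0) : ∀ᵐ ω ∂μ, X ω = deriv (cgf X μ) z := by
  set c := deriv (cgf X μ) z
  have h_int : Integrable (fun ω => (X ω - c) ^ 2 * exp (z * X ω)) μ :=
    integrable_sub_sq_mul (interior_subset (s := integrableExpSet X μ) hz)
      (by simpa using integrable_pow_mul_exp_of_mem_interior_integrableExpSet hz 1)
      (integrable_pow_mul_exp_of_mem_interior_integrableExpSet hz 2) c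
  rw [iteratedDeriv_two_cgf_eq_integral hz, div_eq_zero_iff,
    or_iff_left (mgf_pos (interior_subset (s := integrableExpSet X μ) hz)).ne',
    integral_eq_zero_iff_of_nonneg (fun ω => by positivity) h_int] at h
  filter_upwards [h] with ω hω
  simpa [sub_eq_zero, (exp_pos _).ne'] using hω

lemma exp_nat_mul_cgf (hz : Integrable (fun ω => exp (z * X ω)) μ) (N : ℕ) :
    exp (N * cgf X μ z) = mgf X μ z ^ N := by
  rw [exp_nat_mul, exp_cgf hz]

variable {z₀ : ℝ}

lemma exp_nat_mul_cgf_le (hX : ∀ z, Integrable (fun ω => exp (z * X ω)) μ) (N : ℕ)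
    (hz : |z - z₀| ≤ 1) :
    exp (N * cgf X μ z) ≤ (mgf X μ (z₀ - 2) + mgf X μ (z₀ + 2)) ^ N := by
  rw [exp_nat_mul_cgf (hX z)]
  gcongr
  · exact mgf_nonneg
  · exact mgf_le_mgf_add_mgf hX (by linarith [abs_le.1 hz]) (by linarith [abs_le.1 hz])

lemma iteratedDeriv_two_add_sq_deriv_cgf_mul_exp_le
    (hX : ∀ z, Integrable (fun ω => exp (z * X ω)) μ)
    {N : ℕ} (hN : 1 ≤ N) (hz : |z - z₀| ≤ 1) :
    (iteratedDeriv 2 (cgf X μ) z + deriv (cgf X μ) z ^ 2) * exp (N * cgf X μ z)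
      ≤ 4 * (mgf X μ (z₀ - 2) + mgf X μ (z₀ + 2)) ^ N := by
  obtain ⟨n, rfl⟩ : ∃ n, N = n + 1 := ⟨N - 1, by omega⟩
  set R := mgf X μ (z₀ - 2) + mgf X μ (z₀ + 2)
  have hR : ∀ z', |z' - z₀| ≤ 2 → mgf X μ z' ≤ R := fun z' hz' =>
    mgf_le_mgf_add_mgf hX (by linarith [abs_le.1 hz']) (by linarith [abs_le.1 hz'])
  have h_abs : ∀ s : ℝ, |s| ≤ 1 → |z + s - z₀| ≤ 2 := fun s hs => by
    rw [add_sub_right_comm]; linarith [abs_add_le (z - z₀) s]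
  calc (iteratedDeriv 2 (cgf X μ) z + deriv (cgf X μ) z ^ 2) * exp ((n + 1 : ℕ) * cgf X μ z)
      = (∫ ω, X ω ^ 2 * exp (z * X ω) ∂μ) * mgf X μ z ^ n := by
        rw [integral_sq_mul_exp_eq (mem_interior_integrableExpSet_of_forall hX z),
          exp_nat_mul_cgf (hX z), pow_succ]
        ring
    _ ≤ (2 * (R + R)) * R ^ n := by
        have h_second : ∫ ω, X ω ^ 2 * exp (z * X ω) ∂μ ≤ 2 * (R + R) := by
          refine (integral_sq_mul_exp_le hX z).trans ?_
          gcongr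
          · simpa [sub_eq_add_neg] using hR _ (h_abs (-1) (by norm_num))
          · exact hR _ (h_abs 1 (by norm_num))
        have h_nonneg : 0 ≤ ∫ ω, X ω ^ 2 * exp (z * X ω) ∂μ :=
          integral_nonneg fun ω => by positivity
        exact mul_le_mul h_second (pow_le_pow_left₀ mgf_nonneg (hR z (by linarith)) n)
          (pow_nonneg mgf_nonneg n) (h_nonneg.trans h_second)
    _ = 4 * R ^ (n + 1) := by ring

lemma abs_deriv_cgf_mul_exp_le (hX : ∀ z, Integrable (fun ω => exp (z * X ω)) μ)
    {N : ℕ} (hN : 1 ≤ N) (hz : |z - z₀| ≤ 1) :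
    |deriv (cgf X μ) z * exp (N * cgf X μ z)|
      ≤ 5 * (mgf X μ (z₀ - 2) + mgf X μ (z₀ + 2)) ^ N := by
  have h_var := iteratedDeriv_two_cgf_nonneg (mem_interior_integrableExpSet_of_forall hX z)
  have h_abs : |deriv (cgf X μ) z|
      ≤ 1 + (iteratedDeriv 2 (cgf X μ) z + deriv (cgf X μ) z ^ 2) := by
    nlinarith [sq_abs (deriv (cgf X μ) z), sq_nonneg (|deriv (cgf X μ) z| - 1)]
  rw [abs_mul, abs_of_pos (exp_pos _)]
  calc |deriv (cgf X μ) z| * exp (N * cgf X μ z)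
      ≤ (1 + (iteratedDeriv 2 (cgf X μ) z + deriv (cgf X μ) z ^ 2)) * exp (N * cgf X μ z) := by
        gcongr
    _ = exp (N * cgf X μ z)
          + (iteratedDeriv 2 (cgf X μ) z + deriv (cgf X μ) z ^ 2) * exp (N * cgf X μ z) := by
        ring
    _ ≤ (mgf X μ (z₀ - 2) + mgf X μ (z₀ + 2)) ^ N
          + 4 * (mgf X μ (z₀ - 2) + mgf X μ (z₀ + 2)) ^ N :=
        add_le_add (exp_nat_mul_cgf_le hX N hz)
          (iteratedDeriv_two_add_sq_deriv_cgf_mul_exp_le hX hN hz)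
    _ = _ := by ring

lemma abs_iteratedDeriv_two_add_sq_deriv_cgf_mul_exp_le
    (hX : ∀ z, Integrable (fun ω => exp (z * X ω)) μ) {N : ℕ} (hN : 1 ≤ N) (hz : |z - z₀| ≤ 1) :
    |(iteratedDeriv 2 (cgf X μ) z + N * deriv (cgf X μ) z ^ 2) * exp (N * cgf X μ z)|
      ≤ 4 * N * (mgf X μ (z₀ - 2) + mgf X μ (z₀ + 2)) ^ N := by
  have h_var := iteratedDeriv_two_cgf_nonneg (mem_interior_integrableExpSet_of_forall hX z)
  have hN' : (1 : ℝ) ≤ N := by exact_mod_cast hN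
  have h_le : iteratedDeriv 2 (cgf X μ) z + N * deriv (cgf X μ) z ^ 2
      ≤ N * (iteratedDeriv 2 (cgf X μ) z + deriv (cgf X μ) z ^ 2) := by
    nlinarith
  rw [abs_of_nonneg (by positivity)]
  calc (iteratedDeriv 2 (cgf X μ) z + N * deriv (cgf X μ) z ^ 2) * exp (N * cgf X μ z)
      ≤ N * ((iteratedDeriv 2 (cgf X μ) z + deriv (cgf X μ) z ^ 2) * exp (N * cgf X μ z)) := by
        rw [← mul_assoc]; gcongr
    _ ≤ N * (4 * (mgf X μ (z₀ - 2) + mgf X μ (z₀ + 2)) ^ N) :=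
        mul_le_mul_of_nonneg_left (iteratedDeriv_two_add_sq_deriv_cgf_mul_exp_le hX hN hz)
          (Nat.cast_nonneg N)
    _ = _ := by ring

lemma deriv_cgf_zero_eq_integral (h : 0 ∈ interior (integrableExpSet X μ)) :
    deriv (cgf X μ) 0 = ∫ ω, X ω ∂μ := by
  simp [deriv_cgf_zero h]

lemma iteratedDeriv_two_cgf_zero_eq (h : 0 ∈ interior (integrableExpSet X μ)) :
    iteratedDeriv 2 (cgf X μ) 0 = ∫ ω, X ω ^ 2 ∂μ - (∫ ω, X ω ∂μ) ^ 2 := by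
  simp [iteratedDeriv_two_cgf h, deriv_cgf_zero_eq_integral h]

end CGF

section Kernel

variable {𝒴 𝒳 : Type*} [MeasurableSpace 𝒴] [MeasurableSpace 𝒳] {κ : Kernel 𝒴 𝒳}
  {φ : 𝒴 → 𝒳 → ℝ}

lemma measurable_integral_pow_mul_exp [IsSFiniteKernel κ] (hφ : Measurable (Function.uncurry φ))
    (n : ℕ) (z : ℝ) : Measurable fun y => ∫ x, φ y x ^ n * exp (z * φ y x) ∂κ y :=
  (StronglyMeasurable.integral_kernel_prod_right (f := fun y x => φ y x ^ n * exp (z * φ y x))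
    ((hφ.pow_const n).mul (hφ.const_mul z).exp).stronglyMeasurable).measurable

lemma measurable_mgf_kernel [IsSFiniteKernel κ] (hφ : Measurable (Function.uncurry φ)) (z : ℝ) :
    Measurable fun y => mgf (φ y) (κ y) z := by
  simpa [mgf] using measurable_integral_pow_mul_exp hφ 0 z

lemma measurable_exp_nat_mul_cgf_kernel [IsSFiniteKernel κ]
    (hφ : Measurable (Function.uncurry φ)) (N : ℕ) (z : ℝ) :
    Measurable fun y => exp (N * cgf (φ y) (κ y) z) :=
  (((measurable_mgf_kernel hφ z).log).const_mul _).exp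

lemma measurable_deriv_cgf_kernel [IsSFiniteKernel κ] (hφ : Measurable (Function.uncurry φ))
    (hmgf : ∀ z y, Integrable (fun x => exp (z * φ y x)) (κ y)) (z : ℝ) :
    Measurable fun y => deriv (cgf (φ y) (κ y)) z := by
  have h_eq : (fun y => deriv (cgf (φ y) (κ y)) z)
      = fun y => (∫ x, φ y x ^ 1 * exp (z * φ y x) ∂κ y) / mgf (φ y) (κ y) z := by
    ext y
    simp [deriv_cgf (mem_interior_integrableExpSet_of_forall (hmgf · y) z)]
  rw [h_eq]
  exact (measurable_integral_pow_mul_exp hφ 1 z).div (measurable_mgf_kernel hφ z)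

lemma measurable_iteratedDeriv_two_cgf_kernel [IsSFiniteKernel κ]
    (hφ : Measurable (Function.uncurry φ))
    (hmgf : ∀ z y, Integrable (fun x => exp (z * φ y x)) (κ y)) (z : ℝ) :
    Measurable fun y => iteratedDeriv 2 (cgf (φ y) (κ y)) z := by
  have h_eq : (fun y => iteratedDeriv 2 (cgf (φ y) (κ y)) z)
      = fun y => (∫ x, φ y x ^ 2 * exp (z * φ y x) ∂κ y) / mgf (φ y) (κ y) z
          - deriv (cgf (φ y) (κ y)) z ^ 2 := by
    ext y
    rw [iteratedDeriv_two_cgf (mem_interior_integrableExpSet_of_forall (hmgf · y) z)]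
  rw [h_eq]
  exact ((measurable_integral_pow_mul_exp hφ 2 z).div (measurable_mgf_kernel hφ z)).sub
    ((measurable_deriv_cgf_kernel hφ hmgf z).pow_const 2)

end Kernel

section Integrated

variable {𝒴 𝒳 : Type*} [MeasurableSpace 𝒴] [MeasurableSpace 𝒳] {ν : Measure 𝒴}
  {κ : Kernel 𝒴 𝒳} [IsMarkovKernel κ] {φ : 𝒴 → 𝒳 → ℝ} {N : ℕ}

lemma integrable_mgf_add_mgf_pow (hφ : Measurable (Function.uncurry φ))
    (hmgf_pow : ∀ z, Integrable (fun y => mgf (φ y) (κ y) z ^ N) ν) (a b : ℝ) :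
    Integrable (fun y => (mgf (φ y) (κ y) a + mgf (φ y) (κ y) b) ^ N) ν := by
  refine (((hmgf_pow a).add (hmgf_pow b)).const_mul (2 ^ (N - 1))).mono'
    (((measurable_mgf_kernel hφ a).add
      (measurable_mgf_kernel hφ b)).pow_const N).aestronglyMeasurable
    (ae_of_all _ fun y => ?_)
  rw [Real.norm_of_nonneg (pow_nonneg (add_nonneg mgf_nonneg mgf_nonneg) N)]
  exact add_pow_le mgf_nonneg mgf_nonneg N

lemma integrable_exp_nat_mul_cgf_kernel
    (hmgf : ∀ z y, Integrable (fun x => exp (z * φ y x)) (κ y))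
    (hmgf_pow : ∀ z, Integrable (fun y => mgf (φ y) (κ y) z ^ N) ν) (z : ℝ) :
    Integrable (fun y => exp (N * cgf (φ y) (κ y) z)) ν :=
  (hmgf_pow z).congr (ae_of_all _ fun y => (exp_nat_mul_cgf (hmgf z y) N).symm)

lemma integral_exp_nat_mul_cgf_zero [IsProbabilityMeasure ν] :
    ∫ y, exp (N * cgf (φ y) (κ y) 0) ∂ν = 1 := by
  simp [cgf_zero]

lemma integral_deriv_cgf_zero_mul_exp_nat_mul_cgf
    (hmgf : ∀ z y, Integrable (fun x => exp (z * φ y x)) (κ y)) :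
    ∫ y, deriv (cgf (φ y) (κ y)) 0 * exp (N * cgf (φ y) (κ y) 0) ∂ν
      = ∫ y, ∫ x, φ y x ∂κ y ∂ν := by
  refine integral_congr_ae (ae_of_all _ fun y => ?_)
  simp [cgf_zero,
    deriv_cgf_zero_eq_integral (mem_interior_integrableExpSet_of_forall (hmgf · y) 0)]

variable (hφ : Measurable (Function.uncurry φ))
  (hmgf : ∀ z y, Integrable (fun x => exp (z * φ y x)) (κ y))
  (hmgf_pow : ∀ z, Integrable (fun y => mgf (φ y) (κ y) z ^ N) ν) (hN : 1 ≤ N)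

include hφ hmgf hmgf_pow hN

lemma integrable_deriv_cgf_mul_exp_nat_mul_cgf (z : ℝ) :
    Integrable (fun y => deriv (cgf (φ y) (κ y)) z * exp (N * cgf (φ y) (κ y) z)) ν :=
  ((integrable_mgf_add_mgf_pow hφ hmgf_pow (z - 2) (z + 2)).const_mul 5).mono'
    ((measurable_deriv_cgf_kernel hφ hmgf z).mul
      (measurable_exp_nat_mul_cgf_kernel hφ N z)).aestronglyMeasurable
    (ae_of_all _ fun y => abs_deriv_cgf_mul_exp_le (hmgf · y) hN (by simp))

lemma integrable_iteratedDeriv_two_cgf_mul_exp_nat_mul_cgf (z : ℝ) :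
    Integrable (fun y => iteratedDeriv 2 (cgf (φ y) (κ y)) z * exp (N * cgf (φ y) (κ y) z)) ν := by
  refine ((integrable_mgf_add_mgf_pow hφ hmgf_pow (z - 2) (z + 2)).const_mul 4).mono'
    ((measurable_iteratedDeriv_two_cgf_kernel hφ hmgf z).mul
      (measurable_exp_nat_mul_cgf_kernel hφ N z)).aestronglyMeasurable
    (ae_of_all _ fun y => ?_)
  have h_var := iteratedDeriv_two_cgf_nonneg (mem_interior_integrableExpSet_of_forall (hmgf · y) z)
  rw [Real.norm_of_nonneg (by positivity)]
  refine le_trans ?_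
    (iteratedDeriv_two_add_sq_deriv_cgf_mul_exp_le (z := z) (z₀ := z) (hmgf · y) hN (by simp))
  gcongr
  exact le_add_of_nonneg_right (sq_nonneg _)

lemma integrable_sq_deriv_cgf_mul_exp_nat_mul_cgf (z : ℝ) :
    Integrable (fun y => deriv (cgf (φ y) (κ y)) z ^ 2 * exp (N * cgf (φ y) (κ y) z)) ν := by
  refine ((integrable_mgf_add_mgf_pow hφ hmgf_pow (z - 2) (z + 2)).const_mul 4).mono'
    (((measurable_deriv_cgf_kernel hφ hmgf z).pow_const 2).mul
      (measurable_exp_nat_mul_cgf_kernel hφ N z)).aestronglyMeasurable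
    (ae_of_all _ fun y => ?_)
  have h_var := iteratedDeriv_two_cgf_nonneg (mem_interior_integrableExpSet_of_forall (hmgf · y) z)
  rw [Real.norm_of_nonneg (by positivity)]
  refine le_trans ?_
    (iteratedDeriv_two_add_sq_deriv_cgf_mul_exp_le (z := z) (z₀ := z) (hmgf · y) hN (by simp))
  gcongr
  exact le_add_of_nonneg_left h_var

lemma hasDerivAt_integral_exp_nat_mul_cgf (z₀ : ℝ) :
    HasDerivAt (fun z => ∫ y, exp (N * cgf (φ y) (κ y) z) ∂ν)
      (N * ∫ y, deriv (cgf (φ y) (κ y)) z₀ * exp (N * cgf (φ y) (κ y) z₀) ∂ν) z₀ := by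
  rw [← integral_const_mul]
  refine (hasDerivAt_integral_of_dominated_loc_of_deriv_le (closedBall_mem_nhds z₀ one_pos)
    (Eventually.of_forall fun z => (measurable_exp_nat_mul_cgf_kernel hφ N z).aestronglyMeasurable)
    (integrable_exp_nat_mul_cgf_kernel hmgf hmgf_pow z₀)
    (((measurable_deriv_cgf_kernel hφ hmgf z₀).mul
      (measurable_exp_nat_mul_cgf_kernel hφ N z₀)).const_mul _).aestronglyMeasurable
    (ae_of_all _ fun y z hz => ?_)
    ((integrable_mgf_add_mgf_pow hφ hmgf_pow (z₀ - 2) (z₀ + 2)).const_mul (N * 5))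
    (ae_of_all _ fun y z _ => hasDerivAt_exp_nat_mul_cgf (hmgf · y) N z)).2
  rw [norm_mul, Real.norm_natCast, mul_assoc]
  gcongr
  exact abs_deriv_cgf_mul_exp_le (hmgf · y) hN
    (by rwa [mem_closedBall, dist_eq] at hz)

lemma hasDerivAt_integral_deriv_cgf_mul_exp_nat_mul_cgf (z₀ : ℝ) :
    HasDerivAt (fun z => ∫ y, deriv (cgf (φ y) (κ y)) z * exp (N * cgf (φ y) (κ y) z) ∂ν)
      (∫ y, (iteratedDeriv 2 (cgf (φ y) (κ y)) z₀ + N * deriv (cgf (φ y) (κ y)) z₀ ^ 2)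
        * exp (N * cgf (φ y) (κ y) z₀) ∂ν) z₀ :=
  (hasDerivAt_integral_of_dominated_loc_of_deriv_le (closedBall_mem_nhds z₀ one_pos)
    (F' := fun z y => (iteratedDeriv 2 (cgf (φ y) (κ y)) z + N * deriv (cgf (φ y) (κ y)) z ^ 2)
        * exp (N * cgf (φ y) (κ y) z))
    (Eventually.of_forall fun z =>
      (integrable_deriv_cgf_mul_exp_nat_mul_cgf hφ hmgf hmgf_pow hN z).aestronglyMeasurable)
    (integrable_deriv_cgf_mul_exp_nat_mul_cgf hφ hmgf hmgf_pow hN z₀)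
    ((((measurable_iteratedDeriv_two_cgf_kernel hφ hmgf z₀).add
      (((measurable_deriv_cgf_kernel hφ hmgf z₀).pow_const 2).const_mul _)).mul
      (measurable_exp_nat_mul_cgf_kernel hφ N z₀)).aestronglyMeasurable)
    (ae_of_all _ fun y z hz => abs_iteratedDeriv_two_add_sq_deriv_cgf_mul_exp_le (hmgf · y) hN
      (by rwa [mem_closedBall, dist_eq] at hz))
    ((integrable_mgf_add_mgf_pow hφ hmgf_pow (z₀ - 2) (z₀ + 2)).const_mul (4 * N))
    (ae_of_all _ fun y z _ => hasDerivAt_deriv_cgf_mul_exp_nat_mul_cgf (hmgf · y) N z)).2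

lemma integral_iteratedDeriv_two_add_sq_deriv_cgf_zero_mul_exp :
    ∫ y, (iteratedDeriv 2 (cgf (φ y) (κ y)) 0 + N * deriv (cgf (φ y) (κ y)) 0 ^ 2)
        * exp (N * cgf (φ y) (κ y) 0) ∂ν
      = ∫ y, (∫ x, φ y x ^ 2 ∂κ y - (∫ x, φ y x ∂κ y) ^ 2) ∂ν
        + N * ∫ y, (∫ x, φ y x ∂κ y) ^ 2 ∂ν := by
  have h_var : ∀ y, iteratedDeriv 2 (cgf (φ y) (κ y)) 0 * exp (N * cgf (φ y) (κ y) 0)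
      = ∫ x, φ y x ^ 2 ∂κ y - (∫ x, φ y x ∂κ y) ^ 2 := fun y => by
    simp [cgf_zero,
      iteratedDeriv_two_cgf_zero_eq (mem_interior_integrableExpSet_of_forall (hmgf · y) 0)]
  have h_mean : ∀ y, deriv (cgf (φ y) (κ y)) 0 ^ 2 * exp (N * cgf (φ y) (κ y) 0)
      = (∫ x, φ y x ∂κ y) ^ 2 := fun y => by
    simp [cgf_zero,
      deriv_cgf_zero_eq_integral (mem_interior_integrableExpSet_of_forall (hmgf · y) 0)]
  have i_var := (integrable_iteratedDeriv_two_cgf_mul_exp_nat_mul_cgf hφ hmgf hmgf_pow hN 0).congr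
    (ae_of_all _ h_var)
  have i_mean := (integrable_sq_deriv_cgf_mul_exp_nat_mul_cgf hφ hmgf hmgf_pow hN 0).congr
    (ae_of_all _ h_mean)
  rw [← integral_const_mul, ← integral_add i_var (i_mean.const_mul _)]
  refine integral_congr_ae (ae_of_all _ fun y => ?_)
  dsimp only
  rw [← h_var y, ← h_mean y]
  ring

lemma integral_iteratedDeriv_two_add_sq_sub_mul_exp_pos
    (hnondeg : ¬ ∃ c : ℝ, (fun p : 𝒴 × 𝒳 => φ p.1 p.2) =ᵐ[ν ⊗ₘ κ] fun _ => c) (z c : ℝ) :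
    0 < ∫ y, (iteratedDeriv 2 (cgf (φ y) (κ y)) z + N * (deriv (cgf (φ y) (κ y)) z - c) ^ 2)
      * exp (N * cgf (φ y) (κ y) z) ∂ν := by
  have h_var : ∀ y, 0 ≤ iteratedDeriv 2 (cgf (φ y) (κ y)) z := fun y =>
    iteratedDeriv_two_cgf_nonneg (mem_interior_integrableExpSet_of_forall (hmgf · y) z)
  have h_nonneg : ∀ y, 0 ≤ (iteratedDeriv 2 (cgf (φ y) (κ y)) z
      + N * (deriv (cgf (φ y) (κ y)) z - c) ^ 2) * exp (N * cgf (φ y) (κ y) z) := fun y => by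
    have := h_var y
    positivity
  have h_int : Integrable (fun y => (iteratedDeriv 2 (cgf (φ y) (κ y)) z
      + N * (deriv (cgf (φ y) (κ y)) z - c) ^ 2) * exp (N * cgf (φ y) (κ y) z)) ν :=
    ((integrable_iteratedDeriv_two_cgf_mul_exp_nat_mul_cgf hφ hmgf hmgf_pow hN z).add
      ((integrable_sub_sq_mul (integrable_exp_nat_mul_cgf_kernel hmgf hmgf_pow z)
        (integrable_deriv_cgf_mul_exp_nat_mul_cgf hφ hmgf hmgf_pow hN z)
        (integrable_sq_deriv_cgf_mul_exp_nat_mul_cgf hφ hmgf hmgf_pow hN z) c).const_mul N)).congr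
      (ae_of_all _ fun y => by simp only [Pi.add_apply]; ring)
  refine (integral_nonneg h_nonneg).lt_of_ne fun h => hnondeg ⟨c, ?_⟩
  have h_fiber : ∀ᵐ y ∂ν, ∀ᵐ x ∂κ y, φ y x = c := by
    filter_upwards [(integral_eq_zero_iff_of_nonneg h_nonneg h_int).1 h.symm] with y hy
    have hN0 : (N : ℝ) ≠ 0 := by positivity
    have h_zero := (mul_eq_zero.1 hy).resolve_right (exp_pos _).ne'
    rw [add_eq_zero_iff_of_nonneg (h_var y) (by positivity), mul_eq_zero,
      or_iff_right hN0, sq_eq_zero_iff, sub_eq_zero] at h_zero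
    filter_upwards [ae_eq_deriv_cgf_of_iteratedDeriv_two_cgf_eq_zero
      (mem_interior_integrableExpSet_of_forall (hmgf · y) z) h_zero.1] with x hx
    rw [hx, h_zero.2]
  exact Measure.ae_compProd_of_ae_ae (hφ (measurableSet_singleton c)) h_fiber

lemma integral_mul_integral_sub_sq_integral_pos [NeZero ν]
    (hnondeg : ¬ ∃ c : ℝ, (fun p : 𝒴 × 𝒳 => φ p.1 p.2) =ᵐ[ν ⊗ₘ κ] fun _ => c) (z : ℝ) :
    0 < (∫ y, (iteratedDeriv 2 (cgf (φ y) (κ y)) z + N * deriv (cgf (φ y) (κ y)) z ^ 2)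
          * exp (N * cgf (φ y) (κ y) z) ∂ν) * (∫ y, exp (N * cgf (φ y) (κ y) z) ∂ν)
      - N * (∫ y, deriv (cgf (φ y) (κ y)) z * exp (N * cgf (φ y) (κ y) z) ∂ν) ^ 2 := by
  have iw := integrable_exp_nat_mul_cgf_kernel hmgf hmgf_pow z
  have i₁ := integrable_deriv_cgf_mul_exp_nat_mul_cgf hφ hmgf hmgf_pow hN z
  have i₂ := integrable_sq_deriv_cgf_mul_exp_nat_mul_cgf hφ hmgf hmgf_pow hN z
  have iv := integrable_iteratedDeriv_two_cgf_mul_exp_nat_mul_cgf hφ hmgf hmgf_pow hN z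
  have hG : 0 < ∫ y, exp (N * cgf (φ y) (κ y) z) ∂ν := integral_exp_pos iw
  set c := (∫ y, deriv (cgf (φ y) (κ y)) z * exp (N * cgf (φ y) (κ y) z) ∂ν)
    / ∫ y, exp (N * cgf (φ y) (κ y) z) ∂ν
  have h_centered_pos :=
    integral_iteratedDeriv_two_add_sq_sub_mul_exp_pos hφ hmgf hmgf_pow hN hnondeg z c
  have h_second : ∫ y, (iteratedDeriv 2 (cgf (φ y) (κ y)) z + N * deriv (cgf (φ y) (κ y)) z ^ 2)
        * exp (N * cgf (φ y) (κ y) z) ∂ν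
      = ∫ y, iteratedDeriv 2 (cgf (φ y) (κ y)) z * exp (N * cgf (φ y) (κ y) z) ∂ν
        + N * ∫ y, deriv (cgf (φ y) (κ y)) z ^ 2 * exp (N * cgf (φ y) (κ y) z) ∂ν := by
    rw [← integral_const_mul, ← integral_add iv (i₂.const_mul _)]
    exact integral_congr_ae (ae_of_all _ fun y => by ring)
  have h_centered : ∫ y, (iteratedDeriv 2 (cgf (φ y) (κ y)) z
        + N * (deriv (cgf (φ y) (κ y)) z - c) ^ 2) * exp (N * cgf (φ y) (κ y) z) ∂ν
      = ∫ y, iteratedDeriv 2 (cgf (φ y) (κ y)) z * exp (N * cgf (φ y) (κ y) z) ∂ν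
        + N * ∫ y, (deriv (cgf (φ y) (κ y)) z - c) ^ 2 * exp (N * cgf (φ y) (κ y) z) ∂ν := by
    rw [← integral_const_mul, ← integral_add iv ((integrable_sub_sq_mul iw i₁ i₂ c).const_mul _)]
    exact integral_congr_ae (ae_of_all _ fun y => by ring)
  rw [integral_sub_sq_mul iw i₁ i₂ c] at h_centered
  calc _ = (∫ y, exp (N * cgf (φ y) (κ y) z) ∂ν) * ∫ y, (iteratedDeriv 2 (cgf (φ y) (κ y)) z
        + N * (deriv (cgf (φ y) (κ y)) z - c) ^ 2) * exp (N * cgf (φ y) (κ y) z) ∂ν := by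
        rw [h_second, h_centered]
        simp only [c]
        field_simp
        ring
    _ > 0 := mul_pos hG h_centered_pos

end Integrated

section LogComposition

variable {G G₁ G₂ : ℝ → ℝ} {a : ℝ}

lemma hasDerivAt_log_comp_div (ha : a ≠ 0) (hG : ∀ z, HasDerivAt G (a * G₁ z) z)
    (hpos : ∀ z, 0 < G z) (t : ℝ) :
    HasDerivAt (fun t => log (G (t / a))) (G₁ (t / a) / G (t / a)) t :=
  (((hG (t / a)).comp t ((hasDerivAt_id t).div_const a)).log (hpos _).ne').congr_deriv
    (by simp only [Function.comp_apply, id]; field_simp)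

lemma hasDerivAt_div_comp_div (ha : a ≠ 0) (hG : ∀ z, HasDerivAt G (a * G₁ z) z)
    (hG₁ : ∀ z, HasDerivAt G₁ (G₂ z) z) (hpos : ∀ z, 0 < G z) (t : ℝ) :
    HasDerivAt (fun t => G₁ (t / a) / G (t / a))
      ((G₂ (t / a) * G (t / a) - a * G₁ (t / a) ^ 2) / (a * G (t / a) ^ 2)) t := by
  have h_div : HasDerivAt (fun t => t / a) (1 / a) t := by
    simpa using (hasDerivAt_id t).div_const a
  exact (((hG₁ _).comp t h_div).div ((hG _).comp t h_div) (hpos _).ne').congr_deriv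
    (by simp only [Function.comp_apply]; field_simp)

end LogComposition

theorem lambda_strictly_convex_and_derivs_general
    {𝒴 𝒳 : Type*} [MeasurableSpace 𝒴] [MeasurableSpace 𝒳]
    (ν : Measure 𝒴) [IsProbabilityMeasure ν] (κ : Kernel 𝒴 𝒳) [IsMarkovKernel κ]
    (N : ℕ) (hN : 1 ≤ N)
    (φ : 𝒴 → 𝒳 → ℝ) (hφ : Measurable (Function.uncurry φ))
    (hφint : Integrable (fun p => φ p.1 p.2) (ν ⊗ₘ κ))
    (hnondeg : ¬ ∃ c : ℝ, (fun p : 𝒴 × 𝒳 => φ p.1 p.2) =ᵐ[ν ⊗ₘ κ] fun _ => c)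
    -- exponential moments are everywhere finite
    (hmgf : ∀ z : ℝ, ∀ y : 𝒴, Integrable (fun x => Real.exp (z * φ y x)) (κ y))
    (hmgf' : ∀ z : ℝ, Integrable (fun y => (∫ x, Real.exp (z * φ y x) ∂(κ y)) ^ N) ν)
    (Λ : ℝ → ℝ)
    (hΛ : ∀ t : ℝ, Λ t = Real.log (∫ y, (∫ x, Real.exp ((t / N) * φ y x) ∂(κ y)) ^ N ∂ν)) :
    StrictConvexOn ℝ Set.univ Λ ∧
    deriv Λ 0 = ∫ p, φ p.1 p.2 ∂(ν ⊗ₘ κ) ∧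
    deriv (deriv Λ) 0
      = (1 / N : ℝ) * (∫ y, ((∫ x, (φ y x) ^ 2 ∂(κ y)) - (∫ x, φ y x ∂(κ y)) ^ 2) ∂ν)
        + ((∫ y, (∫ x, φ y x ∂(κ y)) ^ 2 ∂ν) - (∫ y, ∫ x, φ y x ∂(κ y) ∂ν) ^ 2) := by
  have hmgf_pow : ∀ z, Integrable (fun y => mgf (φ y) (κ y) z ^ N) ν := hmgf'
  have hN0 : (N : ℝ) ≠ 0 := by positivity
  set G := fun z => ∫ y, exp (N * cgf (φ y) (κ y) z) ∂ν
  set G₁ := fun z => ∫ y, deriv (cgf (φ y) (κ y)) z * exp (N * cgf (φ y) (κ y) z) ∂ν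
  set G₂ := fun z => ∫ y, (iteratedDeriv 2 (cgf (φ y) (κ y)) z
    + N * deriv (cgf (φ y) (κ y)) z ^ 2) * exp (N * cgf (φ y) (κ y) z) ∂ν
  have hG : ∀ z, HasDerivAt G (N * G₁ z) z :=
    hasDerivAt_integral_exp_nat_mul_cgf hφ hmgf hmgf_pow hN
  have hG₁ : ∀ z, HasDerivAt G₁ (G₂ z) z :=
    hasDerivAt_integral_deriv_cgf_mul_exp_nat_mul_cgf hφ hmgf hmgf_pow hN
  have hpos : ∀ z, 0 < G z := fun z =>
    integral_exp_pos (integrable_exp_nat_mul_cgf_kernel hmgf hmgf_pow z)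
  have hΛG : Λ = fun t => log (G (t / N)) := funext fun t => by
    rw [hΛ]
    exact congrArg log
      (integral_congr_ae (ae_of_all _ fun y => (exp_nat_mul_cgf (hmgf _ y) N).symm))
  have hΛ' : ∀ t, HasDerivAt Λ (G₁ (t / N) / G (t / N)) t := by
    rw [hΛG]; exact hasDerivAt_log_comp_div hN0 hG hpos
  have hΛ'' : ∀ t, HasDerivAt (deriv Λ)
      ((G₂ (t / N) * G (t / N) - N * G₁ (t / N) ^ 2) / (N * G (t / N) ^ 2)) t := by
    rw [funext fun t => (hΛ' t).deriv]; exact hasDerivAt_div_comp_div hN0 hG hG₁ hpos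
  have hG0 : G 0 = 1 := integral_exp_nat_mul_cgf_zero
  have hG₁0 : G₁ 0 = ∫ y, ∫ x, φ y x ∂κ y ∂ν := integral_deriv_cgf_zero_mul_exp_nat_mul_cgf hmgf
  have hG₂0 := integral_iteratedDeriv_two_add_sq_deriv_cgf_zero_mul_exp hφ hmgf hmgf_pow hN
  refine ⟨strictConvexOn_univ_of_deriv2_pos
    (continuous_iff_continuousAt.2 fun t => (hΛ' t).continuousAt) fun t => ?_, ?_, ?_⟩
  · rw [Function.iterate_succ_apply', Function.iterate_one, (hΛ'' t).deriv]
    exact div_pos (integral_mul_integral_sub_sq_integral_pos hφ hmgf hmgf_pow hN hnondeg _)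
      (mul_pos (by positivity) (pow_pos (hpos _) 2))
  · rw [(hΛ' 0).deriv, zero_div, hG0, div_one, hG₁0, Measure.integral_compProd hφint]
  · rw [(hΛ'' 0).deriv, zero_div, hG0, hG₁0, show G₂ 0 = _ from hG₂0]
    field_simp
    ring

/-- with `Λ(t) = log E[M(t/N,Y)^N]`, `M(z,y) = E[exp(zφ(X,Y))|Y=y]`
(expressed through the conditional law `κ y` of `X` given `Y = y`), if `φ(X,Y)` is
integrable and non-degenerate and all the needed exponential moments are finite,
then `Λ` is strictly convex, `Λ'(0) = E[φ(X,Y)]` and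
`Λ''(0) = (1/N)E[Var(φ(X,Y)|Y)] + Var(E[φ(X,Y)|Y])`. -/
theorem lambda_strictly_convex_and_derivs
    {𝒴 𝒳 : Type*} [MeasurableSpace 𝒴] [MeasurableSpace 𝒳]
    (ν : Measure 𝒴) [IsProbabilityMeasure ν] (κ : Kernel 𝒴 𝒳) [IsMarkovKernel κ]
    (N : ℕ) (hN : 1 ≤ N)
    (φ : 𝒴 → 𝒳 → ℝ) (hφ : Measurable (Function.uncurry φ))
    (hφint : Integrable (fun p => φ p.1 p.2) (ν ⊗ₘ κ))
    (hnondeg : ¬ ∃ c : ℝ, (fun p : 𝒴 × 𝒳 => φ p.1 p.2) =ᵐ[ν ⊗ₘ κ] fun _ => c)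
    -- exponential moments are everywhere finite
    (hmgf : ∀ z : ℝ, ∀ y : 𝒴, Integrable (fun x => Real.exp (z * φ y x)) (κ y))
    (hmgf' : ∀ z : ℝ, Integrable (fun y => (∫ x, Real.exp (z * φ y x) ∂(κ y)) ^ N) ν)
    (hmom : ∀ z : ℝ, Integrable (fun p => (φ p.1 p.2) ^ 2 * Real.exp (z * φ p.1 p.2)) (ν ⊗ₘ κ))
    (Λ : ℝ → ℝ)
    (hΛ : ∀ t : ℝ, Λ t = Real.log (∫ y, (∫ x, Real.exp ((t / N) * φ y x) ∂(κ y)) ^ N ∂ν)) :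
    StrictConvexOn ℝ Set.univ Λ ∧
    deriv Λ 0 = ∫ p, φ p.1 p.2 ∂(ν ⊗ₘ κ) ∧
    deriv (deriv Λ) 0
      = (1 / N : ℝ) * (∫ y, ((∫ x, (φ y x) ^ 2 ∂(κ y)) - (∫ x, φ y x ∂(κ y)) ^ 2) ∂ν)
        + ((∫ y, (∫ x, φ y x ∂(κ y)) ^ 2 ∂ν) - (∫ y, ∫ x, φ y x ∂(κ y) ∂ν) ^ 2) :=
  lambda_strictly_convex_and_derivs_general ν κ N hN φ hφ hφint hnondeg hmgf hmgf' Λ hΛ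
end

section
/- Suppose Γ(X,Y) is a random variable satisfying the conditional sub-Gaussian bound E[exp(tΓ)|Y] ≤ exp(t·E[Γ|Y] + b₁²t²/2) a.s. and the sub-Gaussian bound E[exp(t·E[Γ|Y])] ≤ exp(t·E[Γ] + b₂²t²/2), for all t ∈ ℝ. Then log E[ (E[exp((t/N)Γ)|Y])^N ] ≤ t·E[Γ] + (1/2)(b₁²/N + b₂²)t² for all t ∈ ℝ. -/
/-!
Raising the conditional sub-Gaussian bound at `t / N` to the `N`-th power gives
`E[exp((t/N)Γ) | Y]^N ≤ exp(b₁² t² / (2N)) · exp(t E[Γ|Y])`, since the linear terms add up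
to `t E[Γ|Y]` while the quadratic ones only add up to `b₁² t² / (2N)`. Taking expectations and
applying the sub-Gaussian bound for `E[Γ|Y]` gives the claim. Conditional Jensen,
`exp(t E[Γ|Y]) ≤ E[exp(tΓ) | Y]`, makes `exp(t E[Γ|Y])` integrable, without which its
expectation in the second bound would be the junk value `0`.
-/

open MeasureTheory Real

section

variable {Ω : Type*} {m m₀ : MeasurableSpace Ω} {μ : Measure Ω} {X : Ω → ℝ}

theorem exp_mul_condExp_le_condExp_exp_mul [IsFiniteMeasure μ] (hm : m ≤ m₀)
    (hX : Integrable X μ) (t : ℝ) (hexp : Integrable (fun ω => exp (t * X ω)) μ) :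
    ∀ᵐ ω ∂μ, exp (t * μ[X|m] ω) ≤ μ[fun ω => exp (t * X ω)|m] ω :=
  (convexOn_exp.comp_linearMap (LinearMap.lsmul ℝ ℝ t)).map_condExp_le_univ hm
    (by fun_prop : Continuous fun x => exp (t * x)).lowerSemicontinuous hX hexp

theorem integrable_exp_mul_condExp [IsFiniteMeasure μ] (hm : m ≤ m₀)
    (hX : Integrable X μ) (t : ℝ) (hexp : Integrable (fun ω => exp (t * X ω)) μ) :
    Integrable (fun ω => exp (t * μ[X|m] ω)) μ := by
  refine (integrable_condExp (m := m) (f := fun ω => exp (t * X ω))).mono' ?_ ?_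
  · exact (measurable_exp.comp_aemeasurable
      ((stronglyMeasurable_condExp.mono hm).aemeasurable.const_mul t)).aestronglyMeasurable
  · filter_upwards [exp_mul_condExp_le_condExp_exp_mul hm hX t hexp] with ω h
    rwa [norm_of_nonneg (exp_pos _).le]

theorem condExp_exp_div_pow_le {b t : ℝ} {N : ℕ} (hN : N ≠ 0)
    (hsub : ∀ᵐ ω ∂μ, μ[fun ω => exp (t / N * X ω)|m] ω
      ≤ exp (t / N * μ[X|m] ω + b ^ 2 * (t / N) ^ 2 / 2)) :
    ∀ᵐ ω ∂μ, (μ[fun ω => exp (t / N * X ω)|m] ω) ^ N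
      ≤ exp (b ^ 2 * t ^ 2 / (2 * N)) * exp (t * μ[X|m] ω) := by
  filter_upwards [hsub, condExp_nonneg (m := m) (μ := μ)
    (f := fun ω => exp (t / N * X ω)) (.of_forall fun ω => (exp_pos _).le)] with ω h h₀
  calc _ ≤ exp (t / N * μ[X|m] ω + b ^ 2 * (t / N) ^ 2 / 2) ^ N := pow_le_pow_left₀ h₀ h N
    _ = _ := by
      rw [← exp_nat_mul, ← exp_add]
      congr 1
      field_simp
      ring

theorem integral_pow_pos_of_integral_pos {f : Ω → ℝ} (N : ℕ)
    (hf₀ : 0 ≤ᵐ[μ] f) (hf : Integrable f μ) (hfN : Integrable (fun ω => f ω ^ N) μ)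
    (hpos : 0 < ∫ ω, f ω ∂μ) : 0 < ∫ ω, f ω ^ N ∂μ := by
  rw [integral_pos_iff_support_of_nonneg_ae hf₀ hf] at hpos
  rw [integral_pos_iff_support_of_nonneg_ae (hf₀.mono fun ω h => pow_nonneg h N) hfN]
  exact hpos.trans_le (measure_mono fun ω h => pow_ne_zero N h)

end

/-- if `Γ` satisfies the conditional sub-Gaussian bound given `Y` with
constant `b₁` and the sub-Gaussian bound for `E[Γ|Y]` with constant `b₂`, then
`log E[(E[exp((t/N)Γ)|Y])^N] ≤ t·E[Γ] + (1/2)(b₁²/N + b₂²)t²` for all `t`. -/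
theorem subgaussian_hierarchical_mgf_bound
    {Ω : Type*} [MeasurableSpace Ω] (μ : Measure Ω) [IsProbabilityMeasure μ]
    {𝒴 : Type*} [MeasurableSpace 𝒴] (Y : Ω → 𝒴) (hY : Measurable Y)
    (Γ : Ω → ℝ) (hΓmeas : Measurable Γ) (hΓint : Integrable Γ μ)
    (hexpint : ∀ t : ℝ, Integrable (fun ω => Real.exp (t * Γ ω)) μ)
    (b₁ b₂ : ℝ) (hb₁ : 0 < b₁) (hb₂ : 0 < b₂) (N : ℕ) (hN : 1 ≤ N)
    (m : MeasurableSpace Ω) (hm : m = MeasurableSpace.comap Y inferInstance)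
    (hsub1 : ∀ t : ℝ, ∀ᵐ ω ∂μ,
      condExp m μ (fun ω' => Real.exp (t * Γ ω')) ω
        ≤ Real.exp (t * condExp m μ Γ ω + b₁ ^ 2 * t ^ 2 / 2))
    (hsub2 : ∀ t : ℝ,
      ∫ ω, Real.exp (t * condExp m μ Γ ω) ∂μ
        ≤ Real.exp (t * ∫ ω, Γ ω ∂μ + b₂ ^ 2 * t ^ 2 / 2)) :
    ∀ t : ℝ,
      Real.log (∫ ω, (condExp m μ (fun ω' => Real.exp ((t / N) * Γ ω')) ω) ^ N ∂μ)
        ≤ t * (∫ ω, Γ ω ∂μ) + (1 / 2) * (b₁ ^ 2 / N + b₂ ^ 2) * t ^ 2 := by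
  intro t
  have hle := hm ▸ hY.comap_le
  have hN₀ : N ≠ 0 := Nat.one_le_iff_ne_zero.mp hN
  set f := μ[fun ω => exp (t / N * Γ ω)|m]
  set C := exp (b₁ ^ 2 * t ^ 2 / (2 * N))
  have hbound := condExp_exp_div_pow_le hN₀ (hsub1 (t / N))
  have hg := integrable_exp_mul_condExp hle hΓint t (hexpint t)
  have hf₀ : 0 ≤ᵐ[μ] f := condExp_nonneg (.of_forall fun ω => (exp_pos _).le)
  have hfN : Integrable (fun ω => f ω ^ N) μ := by
    refine (hg.const_mul C).mono'
      ((stronglyMeasurable_condExp.mono hle).aestronglyMeasurable.pow N) ?_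
    filter_upwards [hbound, hf₀] with ω h h₀
    rwa [norm_of_nonneg (pow_nonneg h₀ N)]
  have hpos : 0 < ∫ ω, f ω ^ N ∂μ :=
    integral_pow_pos_of_integral_pos N hf₀ integrable_condExp hfN
      (by rw [integral_condExp hle]; exact integral_exp_pos (hexpint _))
  rw [log_le_iff_le_exp hpos]
  calc ∫ ω, f ω ^ N ∂μ
      ≤ ∫ ω, C * exp (t * μ[Γ|m] ω) ∂μ := integral_mono_ae hfN (hg.const_mul C) hbound
    _ = C * ∫ ω, exp (t * μ[Γ|m] ω) ∂μ := integral_const_mul C _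
    _ ≤ C * exp (t * ∫ ω, Γ ω ∂μ + b₂ ^ 2 * t ^ 2 / 2) := by gcongr; exact hsub2 t
    _ = _ := by
      rw [← exp_add]
      congr 1
      field_simp
      ring
end

section
/- Covering-net reduction lemma: Let Θ be compact with diameter D, G and Ĝ both L'-Lipschitz on Θ (Ĝ being L̂-Lipschitz with L̂ ≤ L'), let Θ' be a ϱ-net of Θ and Θ̃ = Θ' ∪ {θ⋆} with θ⋆ a minimizer of G over Θ. If ϱ < (ε−δ)/(2L'), δ' = δ + L'ϱ, ε' = ε − L'ϱ, then {Ŝ^δ ⊄ S^ε} ∩ {L̂ ≤ L'} ⊆ {Ŝ^{δ'}(Θ̃) ⊄ S^{ε'}(Θ̃)}, where S^ε(A) = {θ∈A: G(θ) ≤ min_A G + ε} and Ŝ^δ(A) analogously for Ĝ. -/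
/-! Move a bad near-minimizer `θ` of `Ĝ` to a net point `θ'` with `‖θ - θ'‖ < ϱ`: both `G`
and `Ĝ` change by at most `L'ϱ`. Restricting to `Θ̃ ⊆ Θ` can only raise `min Ĝ`, so `θ'`
stays a `(δ + L'ϱ)`-minimizer of `Ĝ` on `Θ̃`; and `min_Θ̃ G = min_Θ G` because `θ⋆ ∈ Θ̃`,
so `θ'` stays `(ε - L'ϱ)`-suboptimal for `G`. -/

open Set

section NearMinimizers

variable {α : Type*} {f : α → ℝ} {s t : Set α} {a x y : α}

theorem IsMinOn.csInf_image_eq (ha : a ∈ s) (hmin : IsMinOn f s a) : sInf (f '' s) = f a :=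
  IsLeast.csInf_eq ⟨mem_image_of_mem f ha, forall_mem_image.2 hmin⟩

theorem apply_le_csInf_image_add_of_subset {δ η : ℝ} (hbdd : BddBelow (f '' s)) (hts : t ⊆ s)
    (hy : y ∈ t) (hx : f x ≤ sInf (f '' s) + δ) (hxy : f y ≤ f x + η) :
    f y ≤ sInf (f '' t) + (δ + η) := by
  have : sInf (f '' s) ≤ sInf (f '' t) :=
    csInf_le_csInf hbdd (nonempty_of_mem (mem_image_of_mem f hy)) (image_mono hts)
  linarith

theorem csInf_image_add_lt_apply_of_subset {ε η : ℝ} (ha : a ∈ t) (hts : t ⊆ s)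
    (hmin : IsMinOn f s a) (hx : sInf (f '' s) + ε < f x) (hxy : f x - η ≤ f y) :
    sInf (f '' t) + (ε - η) < f y := by
  rw [hmin.csInf_image_eq (hts ha)] at hx
  rw [(hmin.on_subset hts).csInf_image_eq ha]
  linarith

end NearMinimizers

section Lipschitz

variable {E : Type*} [SeminormedAddCommGroup E] {f : E → ℝ} {s : Set E} {K : ℝ}

theorem IsCompact.bddBelow_image_of_abs_sub_le (hs : IsCompact s)
    (hf : ∀ x ∈ s, ∀ y ∈ s, |f x - f y| ≤ K * ‖x - y‖) : BddBelow (f '' s) :=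
  hs.bddBelow_image <| LipschitzOnWith.continuousOn <|
    LipschitzOnWith.of_dist_le' fun x hx y hy => by
      rw [Real.dist_eq, dist_eq_norm]; exact hf x hx y hy

theorem abs_sub_le_mul_of_norm_sub_lt {L ρ : ℝ} {x y : E} (hKL : K ≤ L) (hL : 0 ≤ L)
    (hf : ∀ x ∈ s, ∀ y ∈ s, |f x - f y| ≤ K * ‖x - y‖) (hx : x ∈ s) (hy : y ∈ s)
    (hxy : ‖x - y‖ < ρ) : |f x - f y| ≤ L * ρ :=
  calc |f x - f y| ≤ K * ‖x - y‖ := hf x hx y hy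
    _ ≤ L * ‖x - y‖ := mul_le_mul_of_nonneg_right hKL (norm_nonneg _)
    _ ≤ L * ρ := mul_le_mul_of_nonneg_left hxy.le hL

end Lipschitz

theorem covering_net_reduction_general
    {V : Type*} [NormedAddCommGroup V] [NormedSpace ℝ V]
    (Θset : Set V) (hcompact : IsCompact Θset)
    (G Ghat : V → ℝ) (Lhat L' : ℝ) (hL' : 0 < L') (hLhat : Lhat ≤ L')
    (hGLip : ∀ θ ∈ Θset, ∀ θ' ∈ Θset, |G θ - G θ'| ≤ L' * ‖θ - θ'‖)
    (hGhatLip : ∀ θ ∈ Θset, ∀ θ' ∈ Θset, |Ghat θ - Ghat θ'| ≤ Lhat * ‖θ - θ'‖)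
    (θs : V) (hθs : θs ∈ Θset) (hθsmin : ∀ θ ∈ Θset, G θs ≤ G θ)
    (Θ' : Set V) (hΘ' : Θ' ⊆ Θset)
    (ϱ : ℝ) (hnet : ∀ θ ∈ Θset, ∃ θ' ∈ Θ', ‖θ - θ'‖ < ϱ)
    (ε δ δ' ε' : ℝ) (hδ' : δ' = δ + L' * ϱ) (hε' : ε' = ε - L' * ϱ) :
    (∃ θ ∈ Θset, Ghat θ ≤ sInf (Ghat '' Θset) + δ ∧ G θ > sInf (G '' Θset) + ε) →
      ∃ θ' ∈ insert θs Θ',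
        Ghat θ' ≤ sInf (Ghat '' insert θs Θ') + δ'
          ∧ G θ' > sInf (G '' insert θs Θ') + ε' := by
  rintro ⟨θ, hθ, hGhatθ, hGθ⟩
  obtain ⟨θ', hθ'net, hclose⟩ := hnet θ hθ
  have hsub : insert θs Θ' ⊆ Θset := insert_subset hθs hΘ'
  have hGhat_close :=
    abs_sub_le_mul_of_norm_sub_lt hLhat hL'.le hGhatLip hθ (hΘ' hθ'net) hclose
  have hG_close := abs_sub_le_mul_of_norm_sub_lt le_rfl hL'.le hGLip hθ (hΘ' hθ'net) hclose
  subst hδ' hε'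
  refine ⟨θ', mem_insert_of_mem _ hθ'net, ?_, ?_⟩
  · exact apply_le_csInf_image_add_of_subset (hcompact.bddBelow_image_of_abs_sub_le hGhatLip)
      hsub (mem_insert_of_mem _ hθ'net) hGhatθ (by linarith [(abs_le.mp hGhat_close).1])
  · exact csInf_image_add_lt_apply_of_subset (mem_insert _ _) hsub hθsmin hGθ
      (by linarith [(abs_le.mp hG_close).2])

/-- covering-net reduction lemma. If `G` is `L'`-Lipschitz and `Ĝ` is
`L̂`-Lipschitz (`L̂ ≤ L'`) on a compact set `Θ`, `Θ'` is a `ϱ`-net of `Θ`,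
`Θ̃ = Θ' ∪ {θ⋆}` with `θ⋆` a minimizer of `G` over `Θ`, and `ϱ < (ε−δ)/(2L')`,
`δ' = δ + L'ϱ`, `ε' = ε − L'ϱ`, then
`{Ŝ^δ ⊄ S^ε} ∩ {L̂ ≤ L'} ⊆ {Ŝ^{δ'}(Θ̃) ⊄ S^{ε'}(Θ̃)}`. -/
theorem covering_net_reduction
    {V : Type*} [NormedAddCommGroup V] [NormedSpace ℝ V]
    (Θset : Set V) (hcompact : IsCompact Θset) (hne : Θset.Nonempty)
    (D : ℝ) (hD : D = Metric.diam Θset)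
    (G Ghat : V → ℝ) (Lhat L' : ℝ) (hL' : 0 < L') (hLhat : Lhat ≤ L')
    (hGLip : ∀ θ ∈ Θset, ∀ θ' ∈ Θset, |G θ - G θ'| ≤ L' * ‖θ - θ'‖)
    (hGhatLip : ∀ θ ∈ Θset, ∀ θ' ∈ Θset, |Ghat θ - Ghat θ'| ≤ Lhat * ‖θ - θ'‖)
    (θs : V) (hθs : θs ∈ Θset) (hθsmin : ∀ θ ∈ Θset, G θs ≤ G θ)
    (Θ' : Set V) (hΘ' : Θ' ⊆ Θset)
    (ϱ : ℝ) (hϱpos : 0 < ϱ) (hnet : ∀ θ ∈ Θset, ∃ θ' ∈ Θ', ‖θ - θ'‖ < ϱ)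
    (ε δ δ' ε' : ℝ) (hδ : 0 < δ) (hδε : δ < ε)
    (hϱ : ϱ < (ε - δ) / (2 * L')) (hδ' : δ' = δ + L' * ϱ) (hε' : ε' = ε - L' * ϱ) :
    (∃ θ ∈ Θset, Ghat θ ≤ sInf (Ghat '' Θset) + δ ∧ G θ > sInf (G '' Θset) + ε) →
      ∃ θ' ∈ insert θs Θ',
        Ghat θ' ≤ sInf (Ghat '' insert θs Θ') + δ'
          ∧ G θ' > sInf (G '' insert θs Θ') + ε' :=
  covering_net_reduction_general Θset hcompact G Ghat Lhat L' hL' hLhat hGLip hGhatLip θs hθs hθsmin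
    Θ' hΘ' ϱ hnet ε δ δ' ε' hδ' hε'
end
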